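/- Let μ be a q-tame Borel measure on ℝ² with continuous persistence landscape λ_μ. Then for every t ∈ ℝ and every h ≥ 0, the measure of the open quadrant can be reconstructed from the landscape: μ(Q_{t,h}) = inf{a > 0 : λ_μ(a,t) ≤ h} (where μ(Q_{t,h}) is regarded as a real number, and the infimum is over a nonempty set of positive reals bounded below by 0). -/

import Mathlib

/-!
For fixed `t`, the function `F h = μ(Q_{t,h})` is antitone, right-continuous (continuity of
measures from below, since `Q_{t,h}` is the increasing union of the `Q_{t,h'}` with `h' ↓ h`)
and tends to `0` (continuity from above, since `⋂ h, Q_{t,h} = ∅` and the quadrants are finite).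
The landscape `a ↦ λ_μ(a,t)` is the generalized inverse of `F`, and for such an `F` the
generalized inverse of the generalized inverse is `F` again: `λ_μ(a,t) ≤ h` holds for every
`a > F h` by monotonicity and fails for every `0 < a < F h` by right-continuity.
-/

open MeasureTheory Set Filter Topology

/-- The open quadrant `Q_{t,h} = (-∞, t-h) × (t+h, ∞)`. -/
def quadrant (t h : ℝ) : Set (ℝ × ℝ) := Set.Iio (t - h) ×ˢ Set.Ioi (t + h)

/-- A Borel measure on `ℝ²` is q-tame if every open quadrant has finite measure. -/
def QTame (μ : Measure (ℝ × ℝ)) : Prop := ∀ t h : ℝ, 0 ≤ h → μ (quadrant t h) < ⊤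

/-- The continuous persistence landscape `λ_μ(a,t) = sup {h > 0 : μ(Q_{t,h}) ≥ a}`,
with the convention `sup ∅ = 0` (which is the convention of `Real.sSup`). -/
noncomputable def landscape (μ : Measure (ℝ × ℝ)) (a t : ℝ) : ℝ :=
  sSup {h : ℝ | 0 < h ∧ a ≤ (μ (quadrant t h)).toReal}

/-- `landscape μ · t` is, by definition, `superlevelSup (fun r => (μ (quadrant t r)).toReal)`. -/
noncomputable def superlevelSup (F : ℝ → ℝ) (a : ℝ) : ℝ :=
  sSup {x : ℝ | 0 < x ∧ a ≤ F x}

section superlevelSup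

variable {F : ℝ → ℝ} {h a : ℝ}

lemma superlevelSup_le_of_lt (hh : 0 ≤ h) (hF : AntitoneOn F (Ici h)) (ha : F h < a) :
    superlevelSup F a ≤ h := by
  refine Real.sSup_le (fun x ⟨_, hax⟩ => le_of_not_gt fun hhx => ?_) hh
  exact (hF self_mem_Ici hhx.le hhx.le).not_gt (ha.trans_le hax)

lemma bddAbove_superlevel_of_tendsto_zero (hlim : Tendsto F atTop (𝓝 0)) (ha : 0 < a) :
    BddAbove {x : ℝ | a ≤ F x} := by
  obtain ⟨N, hN⟩ := eventually_atTop.1 (hlim.eventually (gt_mem_nhds ha))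
  exact ⟨N, fun x hax => le_of_not_ge fun hNx => (hN x hNx).not_ge hax⟩

lemma lt_superlevelSup_of_lt (hh : 0 ≤ h) (hlsc : LowerSemicontinuousWithinAt F (Ioi h) h)
    (hlim : Tendsto F atTop (𝓝 0)) (ha₀ : 0 < a) (ha : a < F h) :
    h < superlevelSup F a := by
  obtain ⟨x, hax, hhx⟩ := ((hlsc a ha).and self_mem_nhdsWithin).exists
  have hbdd : BddAbove {x : ℝ | 0 < x ∧ a ≤ F x} :=
    (bddAbove_superlevel_of_tendsto_zero hlim ha₀).mono fun _ hx => hx.2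
  exact hhx.trans_le (le_csSup hbdd ⟨hh.trans_lt hhx, hax.le⟩)

theorem eq_sInf_superlevelSup_le (hh : 0 ≤ h) (hF : AntitoneOn F (Ici h))
    (hlsc : LowerSemicontinuousWithinAt F (Ioi h) h) (hlim : Tendsto F atTop (𝓝 0)) :
    F h = sInf {a : ℝ | 0 < a ∧ superlevelSup F a ≤ h} := by
  have hF₀ : 0 ≤ F h :=
    le_of_tendsto hlim (eventually_atTop.2 ⟨h, fun x hx => hF self_mem_Ici hx hx⟩)
  have mem_of_gt : ∀ a, F h < a → 0 < a ∧ superlevelSup F a ≤ h :=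
    fun a ha => ⟨hF₀.trans_lt ha, superlevelSup_le_of_lt hh hF ha⟩
  refine (csInf_eq_of_forall_ge_of_forall_gt_exists_lt ⟨F h + 1, mem_of_gt _ (by linarith)⟩
    ?_ fun w hw => ⟨(F h + w) / 2, mem_of_gt _ (by linarith), by linarith⟩).symm
  rintro a ⟨ha₀, hah⟩
  exact le_of_not_gt fun ha => (lt_superlevelSup_of_lt hh hlsc hlim ha₀ ha).not_ge hah

end superlevelSup

lemma antitone_quadrant (t : ℝ) : Antitone (quadrant t) :=
  fun _ _ hle => prod_mono (Iio_subset_Iio (by linarith)) (Ioi_subset_Ioi (by linarith))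

lemma measurableSet_quadrant (t h : ℝ) : MeasurableSet (quadrant t h) :=
  measurableSet_Iio.prod measurableSet_Ioi

lemma iInter_quadrant (t : ℝ) : ⋂ h, quadrant t h = ∅ :=
  eq_empty_of_forall_notMem fun p hp => by simpa using (mem_iInter.1 hp (t - p.1)).1

lemma iUnion_quadrant_of_tendsto {t h : ℝ} {u : ℕ → ℝ} (hu : ∀ n, h < u n)
    (hlim : Tendsto u atTop (𝓝 h)) : ⋃ n, quadrant t (u n) = quadrant t h := by
  refine (iUnion_subset fun n => antitone_quadrant t (hu n).le).antisymm
    fun p ⟨hp₁, hp₂⟩ => ?_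
  have hmin : h < min (t - p.1) (p.2 - t) :=
    lt_min (by linarith [mem_Iio.1 hp₁]) (by linarith [mem_Ioi.1 hp₂])
  obtain ⟨n, hn⟩ := (hlim.eventually (gt_mem_nhds hmin)).exists
  obtain ⟨hn₁, hn₂⟩ := lt_min_iff.1 hn
  exact mem_iUnion.2 ⟨n, mem_Iio.2 (by linarith), mem_Ioi.2 (by linarith)⟩

namespace QTame

variable {μ : Measure (ℝ × ℝ)}

lemma antitoneOn_measure_quadrant (hμ : QTame μ) (t : ℝ) :
    AntitoneOn (fun r => (μ (quadrant t r)).toReal) (Ici 0) :=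
  fun _ hx _ _ hxy =>
    ENNReal.toReal_mono (hμ t _ hx).ne (measure_mono (antitone_quadrant t hxy))

lemma tendsto_measure_quadrant_atTop (hμ : QTame μ) (t : ℝ) :
    Tendsto (fun r => (μ (quadrant t r)).toReal) atTop (𝓝 0) := by
  have hlim := tendsto_measure_iInter_atTop (μ := μ)
    (fun r => (measurableSet_quadrant t r).nullMeasurableSet) (antitone_quadrant t)
    ⟨0, (hμ t 0 le_rfl).ne⟩
  rw [iInter_quadrant, measure_empty] at hlim
  exact (ENNReal.tendsto_toReal ENNReal.zero_ne_top).comp hlim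

lemma lowerSemicontinuousWithinAt_measure_quadrant (hμ : QTame μ) (t : ℝ) {h : ℝ}
    (hh : 0 ≤ h) :
    LowerSemicontinuousWithinAt (fun r => (μ (quadrant t r)).toReal) (Ioi h) h := by
  obtain ⟨u, hu_anti, hu_gt, hu_lim⟩ := exists_seq_strictAnti_tendsto h
  have hlim := tendsto_measure_iUnion_atTop (μ := μ) fun m n hmn =>
    antitone_quadrant t (hu_anti.antitone hmn)
  rw [iUnion_quadrant_of_tendsto hu_gt hu_lim] at hlim
  intro a ha
  obtain ⟨n, hn⟩ :=
    (((ENNReal.tendsto_toReal (hμ t h hh).ne).comp hlim).eventually (lt_mem_nhds ha)).exists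
  filter_upwards [Ioo_mem_nhdsGT (hu_gt n)] with x hx
  exact hn.trans_le <|
    hμ.antitoneOn_measure_quadrant t (hh.trans hx.1.le) (hh.trans (hu_gt n).le) hx.2.le

end QTame

/-- Reconstruction of quadrant measures from the continuous persistence landscape:
`μ(Q_{t,h}) = inf {a > 0 : λ_μ(a,t) ≤ h}`. -/
theorem quadrant_measure_eq_inf_landscape
    (μ : Measure (ℝ × ℝ)) (hμ : QTame μ) (t h : ℝ) (hh : 0 ≤ h) :
    (μ (quadrant t h)).toReal = sInf {a : ℝ | 0 < a ∧ landscape μ a t ≤ h} :=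
  eq_sInf_superlevelSup_le hh ((hμ.antitoneOn_measure_quadrant t).mono (Ici_subset_Ici.2 hh))
    (hμ.lowerSemicontinuousWithinAt_measure_quadrant t hh) (hμ.tendsto_measure_quadrant_atTop t)
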